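/- The proportional-share fairness notion suffers from the incentive paradox even with additive valuations. Concretely, take 3 agents and 3 items e_1, e_2, e_3 with additive valuations v_1 = (2, 1, 0), v_2 = (0, 2, 1), v_3 = (3, 0, 2) (listing item values in order), and entitlement vectors b = (0.2, 0.4, 0.4) and b' = (0.3, 0.3, 0.4). Then b' 1-improves b; the unique allocation acceptable under Prop for b is ({e_1}, {e_2}, {e_3}), in which agent 1 receives value 2; and the allocation ({e_2}, {e_3}, {e_1}) is acceptable under Prop for b', giving agent 1 value only 1. -/

import Mathlib

/-!
Under `b` the Prop thresholds are `0.6`, `1.2` and `2`. Agent 2 must receive `e₂`, since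
everything else is worth only `1` to her. With `e₂` gone, the only item of positive value
left for agent 1 is `e₁`, so she must receive it. Agent 3 then needs positive value, and
only `e₃` is left. Once every agent owns her own item, disjointness forces `A i = {eᵢ}`.
-/

namespace Stmt9

/-- A partition of the items into (possibly empty) bundles. -/
def IsPartition {n m : ℕ} (A : Fin n → Finset (Fin m)) : Prop :=
  (∀ i j, i ≠ j → Disjoint (A i) (A j)) ∧ ∀ e, ∃ i, e ∈ A i

/-- Additive value of a bundle. -/
def bval {m : ℕ} (w : Fin m → ℝ) (S : Finset (Fin m)) : ℝ := ∑ e ∈ S, w e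

/-- The additive valuations: v₁ = (2,1,0), v₂ = (0,2,1), v₃ = (3,0,2). -/
def v : Fin 3 → Fin 3 → ℝ := ![![2, 1, 0], ![0, 2, 1], ![3, 0, 2]]

/-- Entitlement vector b = (0.2, 0.4, 0.4). -/
noncomputable def b : Fin 3 → ℝ := ![0.2, 0.4, 0.4]

/-- Entitlement vector b' = (0.3, 0.3, 0.4). -/
noncomputable def b' : Fin 3 → ℝ := ![0.3, 0.3, 0.4]

/-- Acceptable under Prop: each agent gets at least `b i · v_i(M)`. -/
noncomputable def PropAcc (β : Fin 3 → ℝ) (A : Fin 3 → Finset (Fin 3)) : Prop :=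
  IsPartition A ∧ ∀ i, β i * bval (v i) Finset.univ ≤ bval (v i) (A i)

open Finset

section Valuation

variable {m : ℕ} {w : Fin m → ℝ}

lemma bval_le_sub_of_disjoint (hw : ∀ e, 0 ≤ w e) {S T : Finset (Fin m)} (h : Disjoint S T) :
    bval w S ≤ bval w univ - bval w T := by
  have : bval w (S ∪ T) ≤ bval w univ :=
    sum_le_univ_sum_of_nonneg (fun e => hw e)
  unfold bval at this ⊢
  rw [sum_union h] at this
  linarith

lemma mem_of_sub_bval_insert_lt (hw : ∀ e, 0 ≤ w e) {S T : Finset (Fin m)} {e : Fin m}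
    (hST : Disjoint S T) (h : bval w univ - bval w (insert e T) < bval w S) : e ∈ S := by
  by_contra he
  have := bval_le_sub_of_disjoint hw (disjoint_insert_right.2 ⟨he, hST⟩)
  linarith

end Valuation

namespace IsPartition

variable {n m : ℕ} {A : Fin n → Finset (Fin m)}

lemma notMem_of_mem (hA : IsPartition A) {i j : Fin n} {e : Fin m} (hij : i ≠ j)
    (he : e ∈ A j) : e ∉ A i :=
  fun hi => disjoint_left.1 (hA.1 i j hij) hi he

lemma eq_singleton_of_mem_self {A : Fin n → Finset (Fin n)} (hA : IsPartition A)
    (hself : ∀ i, i ∈ A i) (i : Fin n) : A i = {i} := by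
  ext e
  refine ⟨fun he => mem_singleton.2 ?_, fun he => mem_singleton.1 he ▸ hself i⟩
  by_contra hei
  exact hA.notMem_of_mem (Ne.symm hei) (hself e) he

end IsPartition

lemma v_nonneg (i e : Fin 3) : 0 ≤ v i e := by
  fin_cases i <;> fin_cases e <;> norm_num [v]

lemma PropAcc.mem_of_lt_share {β : Fin 3 → ℝ} {A : Fin 3 → Finset (Fin 3)}
    (hA : PropAcc β A) {i e : Fin 3} {T : Finset (Fin 3)} (hT : Disjoint (A i) T)
    (h : bval (v i) univ - bval (v i) (insert e T) < β i * bval (v i) univ) : e ∈ A i :=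
  mem_of_sub_bval_insert_lt (v_nonneg i) hT (h.trans_le (hA.2 i))

lemma eq_singleton_of_propAcc_b {A : Fin 3 → Finset (Fin 3)} (hA : PropAcc b A) (i : Fin 3) :
    A i = {i} := by
  have hpart := hA.1
  have h1 : (1 : Fin 3) ∈ A 1 :=
    hA.mem_of_lt_share (disjoint_empty_right _)
      (by simp [bval, v, b, Fin.sum_univ_three]; norm_num)
  have h0 : (0 : Fin 3) ∈ A 0 :=
    hA.mem_of_lt_share (T := {1})
      (disjoint_singleton_right.2 (hpart.notMem_of_mem (by decide) h1))
      (by simp [bval, v, b, Fin.sum_univ_three]; norm_num)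
  have h2 : (2 : Fin 3) ∈ A 2 :=
    hA.mem_of_lt_share (T := {0, 1})
      (disjoint_insert_right.2 ⟨hpart.notMem_of_mem (by decide) h0,
        disjoint_singleton_right.2 (hpart.notMem_of_mem (by decide) h1)⟩)
      (by simp [bval, v, b, Fin.sum_univ_three]; norm_num)
  refine hpart.eq_singleton_of_mem_self (fun j => ?_) i
  fin_cases j <;> assumption

theorem stmt_9 :
    -- b' 1-improves b
    (b 0 < b' 0 ∧ ∀ j, j ≠ 0 → b' j ≤ b j) ∧
    -- ({e₁},{e₂},{e₃}) is acceptable for b, giving agent 1 value 2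
    (PropAcc b (fun i => {i}) ∧ bval (v 0) {0} = 2) ∧
    -- and it is the unique acceptable allocation for b
    (∀ A : Fin 3 → Finset (Fin 3), PropAcc b A → ∀ i, A i = {i}) ∧
    -- ({e₂},{e₃},{e₁}) is acceptable for b', giving agent 1 value only 1
    (PropAcc b' ![{1}, {2}, {0}] ∧ bval (v 0) {1} = 1) := by
  refine ⟨⟨by norm_num [b, b'], fun j hj => ?_⟩, ⟨⟨?_, fun i => ?_⟩, ?_⟩,
    fun A hA => eq_singleton_of_propAcc_b hA, ⟨?_, fun i => ?_⟩, ?_⟩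
  · fin_cases j
    · exact absurd rfl hj
    all_goals norm_num [b, b']
  · unfold IsPartition; decide
  · fin_cases i <;> simp [bval, b, v, Fin.sum_univ_three] <;> norm_num
  · norm_num [bval, v]
  · unfold IsPartition; decide
  · fin_cases i <;> simp [bval, b', v, Fin.sum_univ_three] <;> norm_num
  · norm_num [bval, v]

end Stmt9
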